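/- Let X be an alphabet having n ≥ 2 letters and let g, h: X* → X* be growing morphisms. Let t ≥ 2 be an integer and let d be a positive integer such that PER(g^d(z)) ≥ (1/t)|g^d(z)| for all z ∈ X. Define e = d + 2n − 1, β(w) = |g(w)| − |h(w)| for w ∈ X*, and B = max over z ∈ X of |β(g^e(z))|. Let m be a positive integer such that |g^d(z)| > 2tm for all z ∈ X and B ≤ m/(n²+1). Define L₁ = COMP(h∘g^e, g∘g^e). Then for every w ∈ X*: w ∈ L₁ if and only if Pref₂(w) ∈ L₁ and F₃(w) ⊆ F₃(L₁). -/
import Mathlib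


open Filter Set

variable {X : Type*}

/-- Apply the morphism with letter images `g` to a word. -/
def applyM (g : X → List X) (w : List X) : List X := w.flatMap g

/-- `iterM g k w` is `g^k(w)`. -/
def iterM (g : X → List X) (k : ℕ) (w : List X) : List X := (applyM g)^[k] w

/-- The letter map of the composition `g ∘ h` (first `h`, then `g`). -/
def compM (g h : X → List X) : X → List X := fun a => applyM g (h a)

/-- The letter map of the power `g^k`. -/
def powM (g : X → List X) (k : ℕ) : X → List X := fun a => iterM g k [a]

/-- A morphism is primitive if some power maps every letter to a word containing every letter. -/
def Primitive (g : X → List X) : Prop := ∃ k : ℕ, 0 < k ∧ ∀ a b : X, a ∈ iterM g k [b]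

/-- `Mg g` is the maximal length of the image of a letter. -/
def Mg [Fintype X] (g : X → List X) : ℕ := Finset.univ.sup fun x => (g x).length

/-- A morphism is growing if the lengths of iterated images of every letter tend to infinity. -/
def Growing (g : X → List X) : Prop :=
  ∀ x : X, Tendsto (fun i => (iterM g i [x]).length) atTop atTop

/-- `w` is a (finite) prefix of the infinite word `s`. -/
def IsPrefI (w : List X) (s : ℕ → X) : Prop := ∀ i (h : i < w.length), w[i]'h = s i

/-- `v` is a factor of the infinite word `s`. -/
def IsFactorI (v : List X) (s : ℕ → X) : Prop :=
  ∃ j : ℕ, ∀ i (h : i < v.length), v[i]'h = s (j + i)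

/-- `g^ω(x)` exists. -/
def OmegaExists (g : X → List X) (x : X) : Prop :=
  [x] <+: g x ∧ Tendsto (fun i => (iterM g i [x]).length) atTop atTop

/-- `s = g^ω(x)`. -/
def IsOmega (g : X → List X) (x : X) (s : ℕ → X) : Prop :=
  OmegaExists g x ∧ ∀ i : ℕ, IsPrefI (iterM g i [x]) s

/-- `s = u^ω` for the nonempty word `u`. -/
def IsPeriodicWord (s : ℕ → X) (u : List X) : Prop :=
  u ≠ [] ∧ ∀ (i : ℕ) (h : i % u.length < u.length), s i = u[i % u.length]'h

/-- A morphism is looping. -/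
def Looping (g : X → List X) : Prop :=
  ∃ k : ℕ, 0 < k ∧ ∃ x : X, ∃ u : List X, ∃ s : ℕ → X,
    IsOmega (powM g k) x s ∧ IsPeriodicWord s u

/-- A morphism is loop-free if it is not looping. -/
def LoopFree (g : X → List X) : Prop := ¬ Looping g

/-- `p` is a period of `u`. -/
def HasPeriod (u : List X) (p : ℕ) : Prop :=
  0 < p ∧ ∀ i : ℕ, i + p < u.length → u[i + p]? = u[i]?

/-- The smallest period of `u`. -/
noncomputable def PER (u : List X) : ℕ := sInf {p | HasPeriod u p}

/-- A primitive word: nonempty and not a proper power of a shorter word. -/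
def PrimitiveWord (u : List X) : Prop :=
  u ≠ [] ∧ ¬∃ (v : List X) (j : ℕ), 2 ≤ j ∧ v.length < u.length ∧
    u = (List.replicate j v).flatten

/-- `COMP g h` : the set of words whose images under `g` and `h` are prefix-comparable. -/
def COMP (g h : X → List X) : Set (List X) :=
  {w | ∃ u₁ u₂ : List X, applyM g w ++ u₁ = applyM h w ++ u₂}

/-- `BAL g h`. -/
noncomputable def BAL (g h : X → List X) : ℕ∞ :=
  ⨆ (x : X) (k : ℕ),
    ((((applyM g (iterM g k [x])).length : ℤ) -
      ((applyM h (iterM g k [x])).length : ℤ)).natAbs : ℕ∞)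

/-- The set of factors of length `q` of the word `w`. -/
def Fq (q : ℕ) (w : List X) : Set (List X) := {v | v.length = q ∧ v <:+: w}

/-- The set of factors of length `q` of words of `L`. -/
def FqL (q : ℕ) (L : Set (List X)) : Set (List X) := ⋃ w ∈ L, Fq q w

/-- `A n = ⌊9 n³ √(n log n)⌋`. -/
noncomputable def Abound (n : ℕ) : ℕ := ⌊9 * (n : ℝ)^3 * Real.sqrt (n * Real.log n)⌋₊


/- ### Auxiliary lemmas ### -/

-- basic morphism lemmas
lemma applyM_append (g : X → List X) (u v : List X) :
    applyM g (u ++ v) = applyM g u ++ applyM g v := by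
  simp [applyM]

lemma applyM_singleton (g : X → List X) (a : X) : applyM g [a] = g a := by
  simp [applyM]

lemma iterM_append (g : X → List X) (k : ℕ) (u v : List X) :
    iterM g k (u ++ v) = iterM g k u ++ iterM g k v := by
  induction k generalizing u v with
  | zero => simp [iterM]
  | succ k ih =>
    simp only [iterM, Function.iterate_succ_apply] at *
    rw [applyM_append, ih]

lemma iterM_succ' (g : X → List X) (k : ℕ) (w : List X) :
    iterM g (k+1) w = applyM g (iterM g k w) := by
  simp [iterM, Function.iterate_succ_apply']

lemma iterM_add (g : X → List X) (j k : ℕ) (w : List X) :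
    iterM g (j + k) w = iterM g j (iterM g k w) := by
  simp [iterM, Function.iterate_add_apply]

lemma iterM_flatMap (g : X → List X) (k : ℕ) (w : List X) :
    iterM g k w = w.flatMap (fun a => iterM g k [a]) := by
  induction w with
  | nil =>
    simp only [List.flatMap_nil]
    induction k with
    | zero => rfl
    | succ k ih => rw [iterM_succ', ih]; rfl
  | cons a w ih =>
    have : (a :: w) = [a] ++ w := rfl
    rw [this, iterM_append, ih]; simp

-- growing consequences
lemma growing_ne_nil {g : X → List X} (hg : Growing g) (x : X) : g x ≠ [] := by
  intro hnil
  have h0 : ∀ i, 1 ≤ i → iterM g i [x] = [] := by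
    intro i hi
    induction i with
    | zero => omega
    | succ i ih =>
      rw [iterM_succ']
      rcases Nat.eq_or_lt_of_le hi with h|h
      · have : iterM g 0 [x] = [x] := rfl
        have hi0 : i = 0 := by omega
        subst hi0
        simp [iterM, applyM, hnil]
      · rw [ih (by omega)]; rfl
  have := hg x
  rw [tendsto_atTop] at this
  obtain ⟨N, hN⟩ := eventually_atTop.mp (this 1)
  have := hN (N+1) (by omega)
  rw [h0 (N+1) (by omega)] at this
  simp at this

lemma length_applyM_ge {g : X → List X} (hg : ∀ a : X, g a ≠ []) (w : List X) :
    w.length ≤ (applyM g w).length := by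
  induction w with
  | nil => simp [applyM]
  | cons a w ih =>
    have : applyM g (a :: w) = g a ++ applyM g w := by
      simp [applyM]
    rw [this]
    have : 1 ≤ (g a).length := List.length_pos_iff.mpr (hg a)
    simp only [List.length_append, List.length_cons]
    omega

lemma length_iterM_mono {g : X → List X} (hg : ∀ a : X, g a ≠ []) (k : ℕ) (w : List X) :
    w.length ≤ (iterM g k w).length := by
  induction k with
  | zero => simp [iterM]
  | succ k ih =>
    rw [iterM_succ']
    exact le_trans ih (length_applyM_ge hg _)

lemma length_iterM_le_succ {g : X → List X} (hg : Growing g) (k : ℕ) (w : List X) :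
    (iterM g k w).length ≤ (iterM g (k+1) w).length := by
  rw [iterM_succ']
  exact length_applyM_ge (growing_ne_nil hg) _

lemma length_iterM_monotone {g : X → List X} (hg : Growing g) (w : List X) :
    Monotone (fun k => (iterM g k w).length) :=
  monotone_nat_of_le_succ (fun k => length_iterM_le_succ hg k w)

lemma two_le_iterM_card [Fintype X] {g : X → List X} (hg : Growing g) (x : X) :
    2 ≤ (iterM g (Fintype.card X) [x]).length := by
  set n := Fintype.card X with hn
  by_contra hlt
  push_neg at hlt
  have hone : ∀ k ≤ n, (iterM g k [x]).length = 1 := by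
    intro k hk
    have h1 : 1 ≤ (iterM g k [x]).length := by
      have := length_iterM_mono (growing_ne_nil hg) k [x]
      simpa using this
    have h2 : (iterM g k [x]).length ≤ (iterM g n [x]).length :=
      length_iterM_monotone hg [x] hk
    omega
  have hex : ∀ k : Fin (n+1), ∃ z : X, iterM g k [x] = [z] := by
    intro k
    exact List.length_eq_one_iff.mp (hone k (by omega))
  choose b hb using hex
  have hcard : Fintype.card X < Fintype.card (Fin (n+1)) := by simp [hn]
  obtain ⟨i, j, hij, hbij⟩ := Fintype.exists_ne_map_eq_of_card_lt b hcard
  -- wlog i < j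
  wlog hlt2 : (i : ℕ) < (j : ℕ) generalizing i j
  · exact this j i hij.symm hbij.symm (by omega)
  set q : ℕ := j - i with hq
  have hq1 : 1 ≤ q := by omega
  have hfix : iterM g q [b i] = [b i] := by
    have h1 : iterM g (q + i) [x] = iterM g q (iterM g i [x]) := iterM_add g q i [x]
    have h2 : (q : ℕ) + i = j := by omega
    rw [h2] at h1
    rw [hb i, hb j] at h1
    rw [← h1, hbij]
  have hfixp : ∀ p : ℕ, iterM g (p * q) [b i] = [b i] := by
    intro p
    induction p with
    | zero => simp [iterM]
    | succ p ih =>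
      have : (p+1) * q = p * q + q := by ring
      rw [this, iterM_add, hfix, ih]
  have := hg (b i)
  rw [tendsto_atTop] at this
  obtain ⟨N, hN⟩ := eventually_atTop.mp (this 2)
  have hNq := hN (N * q + q) (by nlinarith)
  have : (N+1) * q = N * q + q := by ring
  rw [← this, hfixp (N+1)] at hNq
  simp at hNq

lemma le_length_iterM_card_mul [Fintype X] {g : X → List X} (hg : Growing g) (w : List X) :
    2 * w.length ≤ (iterM g (Fintype.card X) w).length := by
  induction w with
  | nil => simp
  | cons a w ih =>
    have : (a :: w) = [a] ++ w := rfl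
    rw [this, iterM_append]
    simp only [List.length_append, List.length_cons]
    have h2 := two_le_iterM_card hg a
    simp only [List.length_cons, List.length_nil]
    omega

lemma three_le_y [Fintype X] {g : X → List X} (hg : Growing g) (c : X) :
    3 ≤ (iterM g (2 * Fintype.card X) [c]).length := by
  have h1 : 2 * Fintype.card X = Fintype.card X + Fintype.card X := by ring
  rw [h1, iterM_add]
  have h2 := two_le_iterM_card hg c
  have h3 := le_length_iterM_card_mul hg (iterM g (Fintype.card X) [c])
  omega

lemma mem_COMP_iff {P Q : X → List X} {w : List X} :
    w ∈ COMP P Q ↔ (applyM P w <+: applyM Q w ∨ applyM Q w <+: applyM P w) := by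
  constructor
  · rintro ⟨u₁, u₂, heq⟩
    have h1 : applyM P w <+: applyM P w ++ u₁ := ⟨u₁, rfl⟩
    have h2 : applyM Q w <+: applyM P w ++ u₁ := ⟨u₂, heq.symm⟩
    exact List.prefix_or_prefix_of_prefix h1 h2
  · rintro (⟨t, ht⟩ | ⟨t, ht⟩)
    · exact ⟨t, [], by simp [ht]⟩
    · exact ⟨[], t, by simp [ht]⟩

lemma COMP_prefix_closed {P Q : X → List X} {w p : List X}
    (hw : w ∈ COMP P Q) (hp : p <+: w) : p ∈ COMP P Q := by
  obtain ⟨u₁, u₂, heq⟩ := hw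
  obtain ⟨s, rfl⟩ := hp
  rw [applyM_append, applyM_append] at heq
  have h1 : applyM P p <+: applyM P p ++ (applyM P s ++ u₁) := ⟨_, rfl⟩
  have h2 : applyM Q p <+: applyM P p ++ (applyM P s ++ u₁) := by
    refine ⟨applyM Q s ++ u₂, ?_⟩
    simpa [List.append_assoc] using heq.symm
  rw [mem_COMP_iff]
  exact List.prefix_or_prefix_of_prefix h1 h2

lemma comp_getElem? {P Q : X → List X} {w : List X} (hw : w ∈ COMP P Q) (j : ℕ) :
    j < (applyM P w).length → j < (applyM Q w).length →
    (applyM P w)[j]? = (applyM Q w)[j]? := by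
  intro h1 h2
  obtain ⟨u₁, u₂, heq⟩ := hw
  calc (applyM P w)[j]? = ((applyM P w) ++ u₁)[j]? := by
        rw [List.getElem?_append_left h1]
    _ = ((applyM Q w) ++ u₂)[j]? := by rw [heq]
    _ = (applyM Q w)[j]? := by rw [List.getElem?_append_left h2]

/-- length difference of the two images -/
def DwI (g h : X → List X) (e : ℕ) (w : List X) : ℤ :=
  ((applyM (compM h (powM g e)) w).length : ℤ) -
    ((applyM (compM g (powM g e)) w).length : ℤ)

lemma HLc_decomp (g : X → List X) (e d n : ℕ) (hE : e + 1 = d + 2*n)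
    (c z' zl : X) (y₀ : List X) (hy : iterM g (2*n) [c] = y₀ ++ [z', zl]) :
    compM g (powM g e) c = iterM g d y₀ ++ iterM g d [z'] ++ iterM g d [zl] := by
  have h1 : compM g (powM g e) c = applyM g (iterM g e [c]) := rfl
  rw [h1, ← iterM_succ', hE, iterM_add, hy]
  have : y₀ ++ [z', zl] = y₀ ++ ([z'] ++ [zl]) := by simp
  rw [this, iterM_append, iterM_append, List.append_assoc]

lemma key_occ (g h : X → List X) (e d n m B : ℕ) (hE : e + 1 = d + 2*n)
    (hBl : ∀ a : X, (DwI g h e [a]).natAbs ≤ B) (hBm' : B ≤ m)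
    (hblock : ∀ z : X, 4*m+1 ≤ (iterM g d [z]).length)
    (c z' zl : X) (y₀ : List X) (hy : iterM g (2*n) [c] = y₀ ++ [z', zl])
    (hy₀ : y₀ ≠ [])
    (v v₀ : List X) (hv : v = v₀ ++ [c])
    (hmem : v ∈ COMP (compM h (powM g e)) (compM g (powM g e)))
    (hDv : (DwI g h e v).natAbs ≤ 2*m) :
    ∀ i, i < (iterM g d [z']).length →
      (iterM g d [z'])[i]? =
        (compM h (powM g e) c)[((((compM h (powM g e) c).length : ℤ) -
          (iterM g d [z']).length - (iterM g d [zl]).length -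
          DwI g h e v).toNat + i)]? := by
  intro i hi
  set Gl : X → List X := compM h (powM g e) with hGL
  set Hl : X → List X := compM g (powM g e) with hHL
  set BB : List X := iterM g d y₀ with hBB
  set x' : List X := iterM g d [z'] with hx'
  set xl : List X := iterM g d [zl] with hxl
  have hHLc : Hl c = BB ++ x' ++ xl := HLc_decomp g e d n hE c z' zl y₀ hy
  -- length facts
  have hLB : 4*m+1 ≤ BB.length := by
    obtain ⟨a, t, rfl⟩ := List.exists_cons_of_ne_nil hy₀
    have : BB = iterM g d [a] ++ iterM g d t := by
      rw [hBB]
      have : (a :: t) = [a] ++ t := rfl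
      rw [this, iterM_append]
    rw [this]
    have := hblock a
    simp only [List.length_append]
    omega
  have hbl' : 4*m+1 ≤ x'.length := hblock z'
  have hbll : 4*m+1 ≤ xl.length := hblock zl
  have lenGv : (applyM Gl v).length = (applyM Gl v₀).length + (Gl c).length := by
    rw [hv, applyM_append, applyM_singleton, List.length_append]
  have lenHv : (applyM Hl v).length = (applyM Hl v₀).length + (Hl c).length := by
    rw [hv, applyM_append, applyM_singleton, List.length_append]
  have lenHLc : (Hl c).length = BB.length + x'.length + xl.length := by
    rw [hHLc]; simp [List.length_append]; omega
  have hDvdef : DwI g h e v = ((applyM Gl v).length : ℤ) - (applyM Hl v).length := rfl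
  have hDlc : (DwI g h e [c]).natAbs ≤ B := hBl c
  have hDlcdef : DwI g h e [c] = ((Gl c).length : ℤ) - (Hl c).length := by
    have : DwI g h e [c] = ((applyM Gl [c]).length : ℤ) - (applyM Hl [c]).length := rfl
    rw [this, applyM_singleton, applyM_singleton]
  -- the absolute index inside the images of v
  set j : ℕ := (applyM Hl v₀).length + (BB.length + i) with hj
  have hjH : j < (applyM Hl v).length := by
    rw [lenHv, lenHLc]; omega
  have hjG : j < (applyM Gl v).length := by
    -- (Gv:ℤ) = Hv + Dv ; j ≤ Hv − xl-len − (x'len − i) < Hv − 2m ≤ Gv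
    omega
  have hjge : (applyM Gl v₀).length ≤ j := by
    omega
  -- chain
  have step1 : x'[i]? = (Hl c)[BB.length + i]? := by
    rw [hHLc]
    rw [List.getElem?_append_left (by simp only [List.length_append]; omega :
      BB.length + i < (BB ++ x').length)]
    rw [List.getElem?_append_right (by omega : BB.length ≤ BB.length + i)]
    congr 1
    omega
  have step2 : (Hl c)[BB.length + i]? = (applyM Hl v)[j]? := by
    rw [hv, applyM_append, applyM_singleton]
    rw [List.getElem?_append_right (by omega : (applyM Hl v₀).length ≤ j)]
    congr 1
    omega
  have step3 : (applyM Hl v)[j]? = (applyM Gl v)[j]? :=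
    (comp_getElem? hmem j hjG hjH).symm
  have step4 : (applyM Gl v)[j]? = (Gl c)[j - (applyM Gl v₀).length]? := by
    rw [hv, applyM_append, applyM_singleton]
    rw [List.getElem?_append_right hjge]
  have hidx : j - (applyM Gl v₀).length =
      (((Gl c).length : ℤ) - x'.length - xl.length - DwI g h e v).toNat + i := by
    omega
  rw [step1, step2, step3, step4, hidx]

lemma sync (g h : X → List X) (e d n m B : ℕ) (hE : e + 1 = d + 2*n)
    (hBl : ∀ a : X, (DwI g h e [a]).natAbs ≤ B) (hBm' : B ≤ m)
    (hblock : ∀ z : X, 4*m+1 ≤ (iterM g d [z]).length)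
    (hPER : ∀ z : X, 2*m < PER (iterM g d [z]))
    (hy3 : ∀ c : X, 3 ≤ (iterM g (2*n) [c]).length)
    (c : X) (u u₀ u' u₀' : List X)
    (hu : u = u₀ ++ [c]) (hu' : u' = u₀' ++ [c])
    (hmu : u ∈ COMP (compM h (powM g e)) (compM g (powM g e)))
    (hmu' : u' ∈ COMP (compM h (powM g e)) (compM g (powM g e)))
    (hDu : (DwI g h e u).natAbs ≤ 2*m) (hDu' : (DwI g h e u').natAbs ≤ 2*m)
    (hdiff : (DwI g h e u - DwI g h e u').natAbs ≤ 2*m) :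
    DwI g h e u = DwI g h e u' := by
  -- decompose y
  set y : List X := iterM g (2*n) [c] with hydef
  have hy3c := hy3 c
  rw [← hydef] at hy3c
  set k : ℕ := y.length - 2 with hk
  have hdroplen : (y.drop k).length = 2 := by
    rw [List.length_drop]; omega
  obtain ⟨z', zl, hrest⟩ := List.length_eq_two.mp hdroplen
  have hy : y = y.take k ++ [z', zl] := by rw [← hrest, List.take_append_drop]
  set y₀ : List X := y.take k with hy₀def
  have hy₀ : y₀ ≠ [] := by
    have : y₀.length = k := by rw [hy₀def, List.length_take]; omega
    intro hnil; rw [hnil] at this; simp at this; omega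
  -- helper for the strict-inequality cases
  have main : ∀ v v₀ vv vv₀ : List X, v = v₀ ++ [c] → vv = vv₀ ++ [c] →
      v ∈ COMP (compM h (powM g e)) (compM g (powM g e)) →
      vv ∈ COMP (compM h (powM g e)) (compM g (powM g e)) →
      (DwI g h e v).natAbs ≤ 2*m → (DwI g h e vv).natAbs ≤ 2*m →
      (DwI g h e v - DwI g h e vv).natAbs ≤ 2*m →
      DwI g h e v < DwI g h e vv → False := by
    intro v v₀ vv vv₀ hv hvv hmv hmvv hDv hDvv hdf hlt
    set x' : List X := iterM g d [z'] with hx'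
    set xl : List X := iterM g d [zl] with hxl
    set Glc : List X := compM h (powM g e) c with hGlc
    have keyv := key_occ g h e d n m B hE hBl hBm' hblock c z' zl y₀ hy hy₀ v v₀ hv hmv hDv
    have keyvv := key_occ g h e d n m B hE hBl hBm' hblock c z' zl y₀ hy hy₀ vv vv₀ hvv hmvv hDvv
    -- length facts for index arithmetic
    have hHLc : compM g (powM g e) c = iterM g d y₀ ++ x' ++ xl :=
      HLc_decomp g e d n hE c z' zl y₀ hy
    have hLB : 4*m+1 ≤ (iterM g d y₀).length := by
      obtain ⟨a, t, hat⟩ := List.exists_cons_of_ne_nil hy₀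
      have h2 : iterM g d y₀ = iterM g d [a] ++ iterM g d t := by
        rw [hat]
        have : (a :: t) = [a] ++ t := rfl
        rw [this, iterM_append]
      rw [h2]
      have := hblock a
      simp only [List.length_append]
      omega
    have lenHLc : (compM g (powM g e) c).length =
        (iterM g d y₀).length + x'.length + xl.length := by
      rw [hHLc]; simp [List.length_append]; omega
    have hDlcdef : DwI g h e [c] = ((Glc).length : ℤ) - ((compM g (powM g e) c).length) := by
      have h0 : DwI g h e [c] =
          ((applyM (compM h (powM g e)) [c]).length : ℤ) -
            (applyM (compM g (powM g e)) [c]).length := rfl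
      rw [h0, applyM_singleton, applyM_singleton]
    have hDlc := hBl c
    have hbl' := hblock z'
    have hbll := hblock zl
    set K : ℤ := ((Glc.length : ℤ) - x'.length - xl.length) with hK
    set s : ℕ := (DwI g h e vv - DwI g h e v).toNat with hs
    have hs0 : 0 < s := by omega
    have hs2m : s ≤ 2*m := by omega
    have hKv : 0 ≤ K - DwI g h e v := by omega
    have hKvv : 0 ≤ K - DwI g h e vv := by omega
    have lx1 : (iterM g d [z']).length = x'.length := by rw [hx']
    have lx2 : (iterM g d [zl]).length = xl.length := by rw [hxl]
    have lx3 : (compM h (powM g e) c).length = Glc.length := by rw [hGlc]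
    have hperiod : HasPeriod x' s := by
      refine ⟨hs0, fun i his => ?_⟩
      have h1 := keyvv (i + s) (by omega)
      have h2 := keyv i (by omega)
      rw [h1, h2]
      congr 1
      omega
    have hle : PER x' ≤ s := Nat.sInf_le hperiod
    have := hPER z'
    rw [← hx'] at this
    omega
  rcases lt_trichotomy (DwI g h e u) (DwI g h e u') with hlt | heq | hgt
  · exact absurd (main u u₀ u' u₀' hu hu' hmu hmu' hDu hDu' hdiff hlt) (by simp)
  · exact heq
  · exfalso
    exact main u' u₀' u u₀ hu' hu hmu' hmu hDu' hDu (by omega) hgt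

lemma ext_step (g h : X → List X) (e d n m B : ℕ) (hE : e + 1 = d + 2*n)
    (hBl : ∀ a : X, (DwI g h e [a]).natAbs ≤ B) (hBm' : B ≤ m)
    (hblock : ∀ z : X, 4*m+1 ≤ (iterM g d [z]).length)
    (hy3 : ∀ c : X, 3 ≤ (iterM g (2*n) [c]).length)
    (c a : X) (u u₀ u' u₀' : List X)
    (hu : u = u₀ ++ [c]) (hu' : u' = u₀' ++ [c])
    (hmu : u ∈ COMP (compM h (powM g e)) (compM g (powM g e)))
    (hmu' : u' ∈ COMP (compM h (powM g e)) (compM g (powM g e)))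
    (hDu : (DwI g h e u).natAbs ≤ 2*m)
    (hDeq : DwI g h e u = DwI g h e u') :
    (u ++ [a] ∈ COMP (compM h (powM g e)) (compM g (powM g e)) ↔
      u' ++ [a] ∈ COMP (compM h (powM g e)) (compM g (powM g e))) := by
  -- two big-length facts about the images of the letter c
  have hy3c := hy3 c
  set y : List X := iterM g (2*n) [c] with hydef
  set k : ℕ := y.length - 2 with hk
  have hdroplen : (y.drop k).length = 2 := by
    rw [List.length_drop]; omega
  obtain ⟨z', zl, hrest⟩ := List.length_eq_two.mp hdroplen
  have hy : y = y.take k ++ [z', zl] := by rw [← hrest, List.take_append_drop]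
  set y₀ : List X := y.take k with hy₀def
  have hy₀ : y₀ ≠ [] := by
    have : y₀.length = k := by rw [hy₀def, List.length_take]; omega
    intro hnil; rw [hnil] at this; simp at this; omega
  have hHLc : compM g (powM g e) c = iterM g d y₀ ++ iterM g d [z'] ++ iterM g d [zl] :=
    HLc_decomp g e d n hE c z' zl y₀ hy
  have hLB : 4*m+1 ≤ (iterM g d y₀).length := by
    obtain ⟨b, t, hat⟩ := List.exists_cons_of_ne_nil hy₀
    have h2 : iterM g d y₀ = iterM g d [b] ++ iterM g d t := by
      rw [hat]
      have : (b :: t) = [b] ++ t := rfl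
      rw [this, iterM_append]
    rw [h2]
    have := hblock b
    simp only [List.length_append]
    omega
  have lenHLc : (compM g (powM g e) c).length =
      (iterM g d y₀).length + (iterM g d [z']).length + (iterM g d [zl]).length := by
    rw [hHLc]; simp [List.length_append]; omega
  have hDlcdef : DwI g h e [c] =
      ((compM h (powM g e) c).length : ℤ) - ((compM g (powM g e) c).length) := by
    have h0 : DwI g h e [c] =
        ((applyM (compM h (powM g e)) [c]).length : ℤ) -
          (applyM (compM g (powM g e)) [c]).length := rfl
    rw [h0, applyM_singleton, applyM_singleton]
  have hDlc := hBl c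
  have hbl' := hblock z'
  have hbll := hblock zl
  have hGlcbig : 2*m + 1 ≤ (compM h (powM g e) c).length := by omega
  have hHlcbig : 2*m + 1 ≤ (compM g (powM g e) c).length := by omega
  set δ : ℤ := DwI g h e u with hδ
  rcases le_or_gt 0 δ with hpos | hneg
  -- case δ ≥ 0
  · set r : List X :=
      (compM h (powM g e) c).drop ((compM h (powM g e) c).length - δ.toNat) with hr
    have hcore : ∀ v v₀ : List X, v = v₀ ++ [c] →
        v ∈ COMP (compM h (powM g e)) (compM g (powM g e)) →
        DwI g h e v = δ →
        ((v ++ [a]) ∈ COMP (compM h (powM g e)) (compM g (powM g e)) ↔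
          ∃ t₁ t₂ : List X, r ++ compM h (powM g e) a ++ t₁ =
            compM g (powM g e) a ++ t₂) := by
      intro v v₀ hv hmv hDv
      obtain ⟨w₁, w₂, heq⟩ := hmv
      have hDvdef : DwI g h e v =
          ((applyM (compM h (powM g e)) v).length : ℤ) -
            (applyM (compM g (powM g e)) v).length := rfl
      have hlen : (applyM (compM g (powM g e)) v).length ≤
          (applyM (compM h (powM g e)) v).length := by omega
      have hpre : applyM (compM g (powM g e)) v <+: applyM (compM h (powM g e)) v :=
        List.prefix_of_prefix_length_le ⟨w₂, heq.symm⟩ ⟨w₁, rfl⟩ hlen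
      have hGu : applyM (compM g (powM g e)) v ++
          (applyM (compM h (powM g e)) v).drop (applyM (compM g (powM g e)) v).length =
          applyM (compM h (powM g e)) v := List.prefix_iff_eq_append.mp hpre
      have lenGv : (applyM (compM h (powM g e)) v).length =
          (applyM (compM h (powM g e)) v₀).length + (compM h (powM g e) c).length := by
        rw [hv, applyM_append, applyM_singleton, List.length_append]
      have lenHv : (applyM (compM g (powM g e)) v).length =
          (applyM (compM g (powM g e)) v₀).length + (compM g (powM g e) c).length := by
        rw [hv, applyM_append, applyM_singleton, List.length_append]
      have hrv : (applyM (compM h (powM g e)) v).drop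
          (applyM (compM g (powM g e)) v).length = r := by
        rw [hv, applyM_append, applyM_append, applyM_singleton, applyM_singleton,
          List.drop_append]
        rw [List.drop_eq_nil_of_le (by simp only [List.length_append]; omega :
          (applyM (compM h (powM g e)) v₀).length ≤
            (applyM (compM g (powM g e)) v₀ ++ compM g (powM g e) c).length)]
        rw [List.nil_append, hr]
        congr 1
        simp only [List.length_append]
        omega
      rw [hrv] at hGu
      constructor
      · rintro ⟨t₁, t₂, heq2⟩
        rw [applyM_append, applyM_append, applyM_singleton, applyM_singleton] at heq2
        rw [← hGu] at heq2
        simp only [List.append_assoc] at heq2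
        have := List.append_cancel_left heq2
        refine ⟨t₁, t₂, ?_⟩
        simp only [List.append_assoc]
        exact this
      · rintro ⟨t₁, t₂, heq2⟩
        refine ⟨t₁, t₂, ?_⟩
        rw [applyM_append, applyM_append, applyM_singleton, applyM_singleton, ← hGu]
        simp only [List.append_assoc] at heq2 ⊢
        rw [heq2]
    rw [hcore u u₀ hu hmu rfl, hcore u' u₀' hu' hmu' hDeq.symm]
  -- case δ < 0
  · set r : List X :=
      (compM g (powM g e) c).drop ((compM g (powM g e) c).length - (-δ).toNat) with hr
    have hcore : ∀ v v₀ : List X, v = v₀ ++ [c] →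
        v ∈ COMP (compM h (powM g e)) (compM g (powM g e)) →
        DwI g h e v = δ →
        ((v ++ [a]) ∈ COMP (compM h (powM g e)) (compM g (powM g e)) ↔
          ∃ t₁ t₂ : List X, compM h (powM g e) a ++ t₁ =
            r ++ compM g (powM g e) a ++ t₂) := by
      intro v v₀ hv hmv hDv
      obtain ⟨w₁, w₂, heq⟩ := hmv
      have hDvdef : DwI g h e v =
          ((applyM (compM h (powM g e)) v).length : ℤ) -
            (applyM (compM g (powM g e)) v).length := rfl
      have hlen : (applyM (compM h (powM g e)) v).length ≤
          (applyM (compM g (powM g e)) v).length := by omega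
      have hpre : applyM (compM h (powM g e)) v <+: applyM (compM g (powM g e)) v :=
        List.prefix_of_prefix_length_le ⟨w₁, rfl⟩ ⟨w₂, heq.symm⟩ hlen
      have hGu : applyM (compM h (powM g e)) v ++
          (applyM (compM g (powM g e)) v).drop (applyM (compM h (powM g e)) v).length =
          applyM (compM g (powM g e)) v := List.prefix_iff_eq_append.mp hpre
      have lenGv : (applyM (compM h (powM g e)) v).length =
          (applyM (compM h (powM g e)) v₀).length + (compM h (powM g e) c).length := by
        rw [hv, applyM_append, applyM_singleton, List.length_append]
      have lenHv : (applyM (compM g (powM g e)) v).length =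
          (applyM (compM g (powM g e)) v₀).length + (compM g (powM g e) c).length := by
        rw [hv, applyM_append, applyM_singleton, List.length_append]
      have hrv : (applyM (compM g (powM g e)) v).drop
          (applyM (compM h (powM g e)) v).length = r := by
        rw [hv, applyM_append, applyM_append, applyM_singleton, applyM_singleton,
          List.drop_append]
        rw [List.drop_eq_nil_of_le (by simp only [List.length_append]; omega :
          (applyM (compM g (powM g e)) v₀).length ≤
            (applyM (compM h (powM g e)) v₀ ++ compM h (powM g e) c).length)]
        rw [List.nil_append, hr]
        congr 1
        simp only [List.length_append]
        omega
      rw [hrv] at hGu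
      constructor
      · rintro ⟨t₁, t₂, heq2⟩
        rw [applyM_append, applyM_append, applyM_singleton, applyM_singleton] at heq2
        rw [← hGu] at heq2
        simp only [List.append_assoc] at heq2
        have := List.append_cancel_left heq2
        refine ⟨t₁, t₂, ?_⟩
        simp only [List.append_assoc]
        exact this
      · rintro ⟨t₁, t₂, heq2⟩
        refine ⟨t₁, t₂, ?_⟩
        rw [applyM_append, applyM_append, applyM_singleton, applyM_singleton, ← hGu]
        simp only [List.append_assoc] at heq2 ⊢
        rw [heq2]
    rw [hcore u u₀ hu hmu rfl, hcore u' u₀' hu' hmu' hDeq.symm]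

lemma DwI_append (g h : X → List X) (e : ℕ) (u v : List X) :
    DwI g h e (u ++ v) = DwI g h e u + DwI g h e v := by
  unfold DwI
  rw [applyM_append, applyM_append]
  simp only [List.length_append]
  push_cast
  ring

lemma DwI_nil (g h : X → List X) (e : ℕ) : DwI g h e [] = 0 := by
  unfold DwI
  simp [applyM]

lemma DwI_zero_of_B_zero (g h : X → List X) (e : ℕ)
    (hBl : ∀ a : X, (DwI g h e [a]).natAbs = 0) (w : List X) : DwI g h e w = 0 := by
  induction w with
  | nil => exact DwI_nil g h e
  | cons a w ih =>
    have : (a :: w) = [a] ++ w := rfl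
    rw [this, DwI_append, ih]
    have := hBl a
    omega

lemma Dw_bounded [Fintype X] (g h : X → List X) (e d n m B : ℕ)
    (hn : n = Fintype.card X) (hn1 : 1 ≤ n)
    (hE : e + 1 = d + 2*n)
    (hBl : ∀ a : X, (DwI g h e [a]).natAbs ≤ B) (hBm' : B ≤ m)
    (hnB : (n+1) * B ≤ m)
    (hblock : ∀ z : X, 4*m+1 ≤ (iterM g d [z]).length)
    (hPER : ∀ z : X, 2*m < PER (iterM g d [z]))
    (hy3 : ∀ c : X, 3 ≤ (iterM g (2*n) [c]).length) :
    ∀ w ∈ COMP (compM h (powM g e)) (compM g (powM g e)), (DwI g h e w).natAbs ≤ m := by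
  intro w hw
  classical
  by_contra hbig
  push_neg at hbig
  rcases Nat.eq_zero_or_pos B with hB0 | hB1
  · have : DwI g h e w = 0 := by
      apply DwI_zero_of_B_zero
      intro a; have := hBl a; omega
    omega
  have hX : Nonempty X := by
    rw [← Fintype.card_pos_iff, ← hn]; omega
  obtain ⟨x₀⟩ := hX
  set L : ℕ := w.length with hL
  obtain ⟨σ, hσ1, hσm⟩ : ∃ σ : ℤ, (σ = 1 ∨ σ = -1) ∧ (m : ℤ) < σ * DwI g h e w := by
    rcases le_or_gt 0 (DwI g h e w) with h0 | h0
    · exact ⟨1, Or.inl rfl, by omega⟩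
    · exact ⟨-1, Or.inr rfl, by omega⟩
  set φ : ℕ → ℤ := fun j => σ * DwI g h e (w.take j) with hφ
  have habs : ∀ v : List X, (DwI g h e v).natAbs = (σ * DwI g h e v).natAbs := by
    intro v; rcases hσ1 with h | h <;> simp [h]
  have hφ0 : φ 0 = 0 := by simp [hφ, DwI_nil]
  have hφL : (m : ℤ) < φ L := by
    simp only [hφ, hL, List.take_length]
    exact hσm
  have hL1 : 1 ≤ L := by
    by_contra hc
    have : L = 0 := by omega
    rw [this] at hφL; rw [hφ0] at hφL
    have : (0:ℤ) ≤ m := by positivity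
    omega
  have hstepφ : ∀ j, j < L → ∃ aj : X, w.take (j+1) = w.take j ++ [aj] ∧
      φ (j+1) = φ j + σ * DwI g h e [aj] := by
    intro j hj
    refine ⟨w[j]'hj, (List.take_concat_get' w j hj).symm, ?_⟩
    simp only [hφ]
    rw [← List.take_concat_get' w j hj, DwI_append]
    ring
  have hstepB : ∀ j, j < L → (φ (j+1) - φ j).natAbs ≤ B := by
    intro j hj
    obtain ⟨aj, _, hstep⟩ := hstepφ j hj
    have h1 := hBl aj
    have h2 : (σ * DwI g h e [aj]).natAbs = (DwI g h e [aj]).natAbs := (habs [aj]).symm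
    omega
  -- first crossing times
  have hex : ∀ k : ℕ, k ≤ n+1 → ∃ j, ((k : ℤ) * B < φ j) := by
    intro k hk
    refine ⟨L, lt_of_le_of_lt ?_ hφL⟩
    have : (k : ℤ) * B ≤ ((n:ℤ)+1) * B := by
      have h' : (k : ℤ) ≤ (n : ℤ) + 1 := by exact_mod_cast hk
      exact mul_le_mul_of_nonneg_right h' (by positivity)
    have h2 : ((n:ℤ)+1) * B ≤ m := by exact_mod_cast hnB
    omega
  set jf : ℕ → ℕ := fun k => if hk : ∃ j, ((k : ℤ) * B < φ j) then Nat.find hk else 0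
    with hjf
  have hjf_spec : ∀ k ≤ n+1, ((k:ℤ) * B < φ (jf k)) ∧ (∀ j' < jf k, ¬ ((k:ℤ) * B < φ j'))
      ∧ jf k ≤ L := by
    intro k hk
    have hk' := hex k hk
    simp only [hjf, dif_pos hk']
    exact ⟨Nat.find_spec hk', fun j' hj' => Nat.find_min hk' hj',
      Nat.find_min' hk' (lt_of_le_of_lt (by
        have : (k : ℤ) * B ≤ ((n:ℤ)+1) * B := by
          have h' : (k : ℤ) ≤ (n : ℤ) + 1 := by exact_mod_cast hk
          exact mul_le_mul_of_nonneg_right h' (by positivity)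
        have h2 : ((n:ℤ)+1) * B ≤ m := by exact_mod_cast hnB
        omega) hφL)⟩
  have hjk_facts : ∀ k, 1 ≤ k → k ≤ n+1 →
      1 ≤ jf k ∧ jf k ≤ L ∧ ((k:ℤ) * B < φ (jf k)) ∧ φ (jf k) ≤ (k:ℤ) * B + B := by
    intro k hk1 hk2
    obtain ⟨hspec, hmin, hle⟩ := hjf_spec k hk2
    have hne0 : jf k ≠ 0 := by
      intro h0
      rw [h0, hφ0] at hspec
      have : (0:ℤ) ≤ (k:ℤ) * B := by positivity
      omega
    have h1le : 1 ≤ jf k := by omega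
    refine ⟨h1le, hle, hspec, ?_⟩
    have hprev := hmin (jf k - 1) (by omega)
    push_neg at hprev
    have hstep := hstepB (jf k - 1) (by omega)
    have : jf k - 1 + 1 = jf k := by omega
    rw [this] at hstep
    omega
  -- pigeonhole on last letters
  set lastF : ℕ → X := fun k => if hk : jf k - 1 < w.length then w[jf k - 1] else x₀
    with hlastF
  have hcard : (Finset.univ : Finset X).card < (Finset.Icc 1 (n+1)).card := by
    rw [Nat.card_Icc]
    simp [← hn]
  obtain ⟨k₁, hk₁, k₂, hk₂, hkne, hfeq⟩ :=
    Finset.exists_ne_map_eq_of_card_lt_of_maps_to hcard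
      (fun k _ => Finset.mem_univ (lastF k))
  simp only [Finset.mem_Icc] at hk₁ hk₂
  -- wlog k₁ < k₂
  have keyfin : ∀ kk₁ kk₂ : ℕ, 1 ≤ kk₁ → kk₁ ≤ n+1 → 1 ≤ kk₂ → kk₂ ≤ n+1 →
      kk₁ < kk₂ → lastF kk₁ = lastF kk₂ → False := by
    intro kk₁ kk₂ h11 h12 h21 h22 hklt hfe
    obtain ⟨hj11, hj12, hj13, hj14⟩ := hjk_facts kk₁ h11 h12
    obtain ⟨hj21, hj22, hj23, hj24⟩ := hjk_facts kk₂ h21 h22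
    set c : X := lastF kk₁ with hc
    have hidx1 : jf kk₁ - 1 < w.length := by omega
    have hidx2 : jf kk₂ - 1 < w.length := by omega
    have hc1 : c = w[jf kk₁ - 1] := by simp [hc, hlastF, dif_pos hidx1]
    have hc2 : c = w[jf kk₂ - 1] := by rw [hfe]; simp [hlastF, dif_pos hidx2]
    set u : List X := w.take (jf kk₁) with hudef
    set u' : List X := w.take (jf kk₂) with hu'def
    have hu : u = w.take (jf kk₁ - 1) ++ [c] := by
      rw [hudef, hc1]
      have hj : jf kk₁ = jf kk₁ - 1 + 1 := by omega
      conv_lhs => rw [hj]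
      exact (List.take_concat_get' w _ hidx1).symm
    have hu' : u' = w.take (jf kk₂ - 1) ++ [c] := by
      rw [hu'def, hc2]
      have hj : jf kk₂ = jf kk₂ - 1 + 1 := by omega
      conv_lhs => rw [hj]
      exact (List.take_concat_get' w _ hidx2).symm
    have hmu : u ∈ COMP (compM h (powM g e)) (compM g (powM g e)) :=
      COMP_prefix_closed hw (List.take_prefix _ w)
    have hmu' : u' ∈ COMP (compM h (powM g e)) (compM g (powM g e)) :=
      COMP_prefix_closed hw (List.take_prefix _ w)
    have hφ1 : φ (jf kk₁) = σ * DwI g h e u := rfl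
    have hφ2 : φ (jf kk₂) = σ * DwI g h e u' := rfl
    have habs1 := habs u
    have habs2 := habs u'
    have hb1 : ((kk₁:ℤ)) * B + B ≤ ((n:ℤ)+2) * B := by
      have h' : (kk₁ : ℤ) ≤ (n:ℤ) + 1 := by exact_mod_cast h12
      have h'' : (kk₁:ℤ) * B ≤ ((n:ℤ)+1) * B :=
        mul_le_mul_of_nonneg_right h' (by positivity)
      linarith
    have hb2 : ((kk₂:ℤ)) * B + B ≤ ((n:ℤ)+2) * B := by
      have h' : (kk₂ : ℤ) ≤ (n:ℤ) + 1 := by exact_mod_cast h22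
      have h'' : (kk₂:ℤ) * B ≤ ((n:ℤ)+1) * B :=
        mul_le_mul_of_nonneg_right h' (by positivity)
      linarith
    have hnB' : ((n:ℤ)+1) * B ≤ m := by exact_mod_cast hnB
    have hnB2 : ((n:ℤ)+2) * B ≤ (m:ℤ) + B := by
      have h'' : ((n:ℤ)+2) * B = ((n:ℤ)+1) * B + B := by ring
      linarith
    have hp1 : (0:ℤ) ≤ (kk₁:ℤ) * B := by positivity
    have hp2 : (0:ℤ) ≤ (kk₂:ℤ) * B := by positivity
    have hub1 : φ (jf kk₁) ≤ (m:ℤ) + B := by linarith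
    have hub2 : φ (jf kk₂) ≤ (m:ℤ) + B := by linarith
    have hlb1 : (0:ℤ) ≤ φ (jf kk₁) := by linarith
    have hlb2 : (0:ℤ) ≤ φ (jf kk₂) := by linarith
    have hDu : (DwI g h e u).natAbs ≤ 2*m := by
      rw [habs1, ← hφ1]; omega
    have hDu' : (DwI g h e u').natAbs ≤ 2*m := by
      rw [habs2, ← hφ2]; omega
    have hdiff : (DwI g h e u - DwI g h e u').natAbs ≤ 2*m := by
      have heqn : (DwI g h e u - DwI g h e u').natAbs =
          (σ * DwI g h e u - σ * DwI g h e u').natAbs := by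
        rcases hσ1 with hh | hh <;> subst hh <;> omega
      rw [heqn, ← hφ1, ← hφ2]
      omega
    have hsync := sync g h e d n m B hE hBl hBm' hblock hPER hy3 c u
      (w.take (jf kk₁ - 1)) u' (w.take (jf kk₂ - 1)) hu hu' hmu hmu' hDu hDu' hdiff
    -- contradiction with distinct bands
    have : φ (jf kk₁) = φ (jf kk₂) := by rw [hφ1, hφ2, hsync]
    have hk12 : ((kk₁:ℤ) + 1) * B ≤ (kk₂:ℤ) * B := by
      have h' : (kk₁ : ℤ) + 1 ≤ (kk₂:ℤ) := by exact_mod_cast hklt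
      exact mul_le_mul_of_nonneg_right h' (by positivity)
    have hdist : ((kk₁:ℤ) + 1) * B = (kk₁:ℤ) * B + B := by ring
    omega
  rcases lt_or_gt_of_ne hkne with hlt | hgt
  · exact keyfin k₁ k₂ hk₁.1 hk₁.2 hk₂.1 hk₂.2 hlt hfeq
  · exact keyfin k₂ k₁ hk₂.1 hk₂.2 hk₁.1 hk₁.2 hgt hfeq.symm

/-- (Lemma 11 of the paper.) Under the stated hypotheses on
`t`, `d`, `e`, `B`, `m` and with `L₁ = COMP(h g^e, g g^e)`, a word `w` belongs to
`L₁` iff `Pref₂(w) ∈ L₁` and `F₃(w) ⊆ F₃(L₁)`. -/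
theorem comp_membership_local_test {X : Type*} [Fintype X]
    (n : ℕ) (hn : n = Fintype.card X) (hn2 : 2 ≤ n)
    (g h : X → List X) (hg : Growing g) (hh : Growing h)
    (t : ℕ) (ht : 2 ≤ t)
    (d : ℕ) (hd : 0 < d)
    (hper : ∀ z : X, ((iterM g d [z]).length : ℝ) / (t : ℝ) ≤ (PER (iterM g d [z]) : ℝ))
    (e : ℕ) (he : e = d + 2 * n - 1)
    (B : ℕ)
    (hB : B = Finset.univ.sup fun z : X =>
      (((applyM g (iterM g e [z])).length : ℤ) -
        ((applyM h (iterM g e [z])).length : ℤ)).natAbs)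
    (m : ℕ) (hm : 0 < m)
    (hdm : ∀ z : X, 2 * t * m < (iterM g d [z]).length)
    (hBm : (B : ℝ) ≤ (m : ℝ) / ((n : ℝ) ^ 2 + 1))
    (L₁ : Set (List X))
    (hL₁ : L₁ = COMP (compM h (powM g e)) (compM g (powM g e))) :
    ∀ w : List X, w ∈ L₁ ↔ (w.take 2 ∈ L₁ ∧ Fq 3 w ⊆ FqL 3 L₁) := by
  subst hL₁
  set C : Set (List X) := COMP (compM h (powM g e)) (compM g (powM g e)) with hC
  -- distilled numeric facts
  have hE : e + 1 = d + 2*n := by omega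
  have hBl : ∀ a : X, (DwI g h e [a]).natAbs ≤ B := by
    intro a
    have hle := Finset.le_sup (f := fun z : X =>
      (((applyM g (iterM g e [z])).length : ℤ) -
        ((applyM h (iterM g e [z])).length : ℤ)).natAbs) (Finset.mem_univ a)
    rw [← hB] at hle
    have h3 : DwI g h e [a] =
        ((compM h (powM g e) a).length : ℤ) - ((compM g (powM g e) a).length : ℤ) := by
      have h0 : DwI g h e [a] =
          ((applyM (compM h (powM g e)) [a]).length : ℤ) -
            (applyM (compM g (powM g e)) [a]).length := rfl
      rw [h0, applyM_singleton, applyM_singleton]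
    have h4 : compM g (powM g e) a = applyM g (iterM g e [a]) := rfl
    have h5 : compM h (powM g e) a = applyM h (iterM g e [a]) := rfl
    rw [h4, h5] at h3
    omega
  have hBn2 : B * (n^2 + 1) ≤ m := by
    have hpos : (0:ℝ) < (n:ℝ)^2 + 1 := by positivity
    have h1 : (B : ℝ) * ((n:ℝ)^2 + 1) ≤ m := by
      rw [← le_div_iff₀ hpos]
      exact hBm
    exact_mod_cast h1
  have hBm' : B ≤ m := by nlinarith
  have hnB : (n+1) * B ≤ m := by nlinarith
  have hblock : ∀ z : X, 4*m+1 ≤ (iterM g d [z]).length := by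
    intro z
    have h1 := hdm z
    have h2 : 4 * m ≤ 2 * t * m := Nat.mul_le_mul_right m (by omega)
    omega
  have hPER : ∀ z : X, 2*m < PER (iterM g d [z]) := by
    intro z
    have h1 := hper z
    have h2 := hdm z
    have ht0 : (0:ℝ) < (t:ℝ) := by positivity
    have h3 : ((2 * t * m : ℕ) : ℝ) < ((iterM g d [z]).length : ℝ) := by exact_mod_cast h2
    have h4 : (2*(m:ℝ)) < ((iterM g d [z]).length : ℝ) / (t:ℝ) := by
      rw [lt_div_iff₀ ht0]
      push_cast at h3 ⊢
      nlinarith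
    have h5 : (2*(m:ℝ)) < (PER (iterM g d [z]) : ℝ) := lt_of_lt_of_le h4 h1
    exact_mod_cast h5
  have hy3 : ∀ c : X, 3 ≤ (iterM g (2*n) [c]).length := by
    intro c
    rw [hn]
    exact three_le_y hg c
  -- main induction for the backward direction
  have main : ∀ N : ℕ, ∀ w : List X, w.length ≤ N →
      w.take 2 ∈ C → Fq 3 w ⊆ FqL 3 C → w ∈ C := by
    intro N
    induction N with
    | zero =>
      intro w hlen h2 _
      have : w = [] := List.length_eq_zero_iff.mp (by omega)
      subst this
      simpa using h2
    | succ N IH =>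
      intro w hlen h2 h3
      by_cases hsmall : w.length ≤ 2
      · rw [List.take_of_length_le hsmall] at h2
        exact h2
      push_neg at hsmall
      -- peel off the last three letters
      have hne : w ≠ [] := by
        intro hnil; rw [hnil] at hsmall; simp at hsmall
      obtain ⟨w', a, rfl⟩ : ∃ w' a, w = w' ++ [a] :=
        ⟨w.dropLast, w.getLast hne, (List.dropLast_append_getLast hne).symm⟩
      have hlw' : 2 ≤ w'.length := by
        simp only [List.length_append, List.length_cons, List.length_nil] at hsmall
        omega
      have hne' : w' ≠ [] := by
        intro hnil; rw [hnil] at hlw'; simp at hlw'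
      obtain ⟨w'', c, rfl⟩ : ∃ w'' c, w' = w'' ++ [c] :=
        ⟨w'.dropLast, w'.getLast hne', (List.dropLast_append_getLast hne').symm⟩
      have hlw'' : 1 ≤ w''.length := by
        simp only [List.length_append, List.length_cons, List.length_nil] at hlw'
        omega
      have hne'' : w'' ≠ [] := by
        intro hnil; rw [hnil] at hlw''; simp at hlw''
      obtain ⟨w₃, b, rfl⟩ : ∃ w₃ b, w'' = w₃ ++ [b] :=
        ⟨w''.dropLast, w''.getLast hne'', (List.dropLast_append_getLast hne'').symm⟩
      set w' : List X := (w₃ ++ [b]) ++ [c] with hw'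
      -- the previous word is in C by induction
      have htk : w'.take 2 = (w' ++ [a]).take 2 :=
        (List.take_append_of_le_length hlw').symm
      have hsub : Fq 3 w' ⊆ Fq 3 (w' ++ [a]) := by
        rintro v ⟨hvl, hvi⟩
        exact ⟨hvl, hvi.trans (List.prefix_append w' [a]).isInfix⟩
      have hw'C : w' ∈ C := by
        apply IH w' (by
          simp only [List.length_append, List.length_cons, List.length_nil] at hlen ⊢
          omega)
        · rw [htk]; exact h2
        · exact fun v hv => h3 (hsub hv)
      -- the three letter factor
      have hfac : [b, c, a] ∈ Fq 3 (w' ++ [a]) := by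
        refine ⟨rfl, ⟨w₃, [], ?_⟩⟩
        simp [hw']
      have hmem := h3 hfac
      simp only [FqL, Set.mem_iUnion] at hmem
      obtain ⟨v, hvC, hlen3, hinf⟩ := hmem
      obtain ⟨s, t', rfl⟩ : ∃ s t', v = s ++ [b, c, a] ++ t' := by
        obtain ⟨s, t', h⟩ := hinf
        exact ⟨s, t', h.symm⟩
      have hu'C : s ++ [b, c] ∈ C :=
        COMP_prefix_closed hvC ⟨[a] ++ t', by simp⟩
      have hu'aC : (s ++ [b, c]) ++ [a] ∈ C := by
        have : (s ++ [b, c]) ++ [a] = s ++ [b, c, a] := by simp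
        rw [this]
        exact COMP_prefix_closed hvC ⟨t', by simp⟩
      -- bounds
      have hbd := Dw_bounded g h e d n m B hn (by omega) hE hBl hBm' hnB hblock hPER hy3
      have hD1 : (DwI g h e w').natAbs ≤ m := hbd w' hw'C
      have hD2 : (DwI g h e (s ++ [b, c])).natAbs ≤ m := hbd _ hu'C
      have hsync := sync g h e d n m B hE hBl hBm' hblock hPER hy3 c
        w' (w₃ ++ [b]) (s ++ [b, c]) (s ++ [b]) rfl (by simp) hw'C hu'C
        (by omega) (by omega) (by omega)
      have hext := ext_step g h e d n m B hE hBl hBm' hblock hy3 c a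
        w' (w₃ ++ [b]) (s ++ [b, c]) (s ++ [b]) rfl (by simp) hw'C hu'C
        (by omega) hsync
      exact hext.mpr hu'aC
  intro w
  constructor
  · intro hw
    refine ⟨COMP_prefix_closed hw (List.take_prefix 2 w), ?_⟩
    intro v hv
    simp only [FqL, Set.mem_iUnion]
    exact ⟨w, hw, hv⟩
  · rintro ⟨h2, h3⟩
    exact main w.length w le_rfl h2 h3
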